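/- Let Λ be a compact metric space, f : Λ → Λ continuous, and suppose the set D = {x ∈ Λ : V_f(x) = M_f(Λ)} is dense in Λ. Then D is residual (contains a dense G_δ) in Λ. -/

import Mathlib

open MeasureTheory Filter Topology
open scoped ENNReal NNReal

variable {Λ : Type*}

/-- Empirical measure `(1/(N+1)) ∑_{j=0}^{N} δ_{f^j y}` (this indexing realizes the
sequence `μ_N` for `N ≥ 1`). -/
noncomputable def empP [MetricSpace Λ] [MeasurableSpace Λ] [BorelSpace Λ]
    (f : Λ → Λ) (y : Λ) (N : ℕ) : ProbabilityMeasure Λ :=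
  ⟨((N + 1 : ℕ) : ℝ≥0∞)⁻¹ • ∑ j ∈ Finset.range (N + 1), Measure.dirac (f^[j] y), by
    constructor
    simp [Measure.smul_apply, ENNReal.inv_mul_cancel]⟩

/-- `V_f(y)`: the set of weak* accumulation points of the empirical measures of `y`. -/
def accPts [MetricSpace Λ] [MeasurableSpace Λ] [BorelSpace Λ] (f : Λ → Λ) (y : Λ) :
    Set (ProbabilityMeasure Λ) :=
  {μ | MapClusterPt μ atTop (empP f y)}

/-- `M_f(Λ)`: the set of `f`-invariant Borel probability measures. -/
def invProb [MetricSpace Λ] [MeasurableSpace Λ] [BorelSpace Λ] (f : Λ → Λ) :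
    Set (ProbabilityMeasure Λ) :=
  {μ | (μ : Measure Λ).map f = μ}

/-- The periodic measure of a periodic point `x` of period `k ≥ 1`. -/
noncomputable def perP [MetricSpace Λ] [MeasurableSpace Λ] [BorelSpace Λ]
    (f : Λ → Λ) (x : Λ) (k : ℕ) (hk : 0 < k) : ProbabilityMeasure Λ :=
  ⟨((k : ℕ) : ℝ≥0∞)⁻¹ • ∑ i ∈ Finset.range k, Measure.dirac (f^[i] x), by
    constructor
    simp [Measure.smul_apply, ENNReal.inv_mul_cancel, hk.ne']⟩

/-!
Integrating `g ∘ f - g` against the `N`-th empirical measure of `x` telescopes to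
`(g (f^[N+1] x) - g x) / (N + 1)`, so every accumulation point of the empirical measures is
invariant, and `D = {x | M_f(Λ) ⊆ V_f(x)}`. Since `V_f(x)` is closed and `M_f(Λ)` is separable,
it suffices to contain a countable dense subset `{μᵢ}` of `M_f(Λ)`; each condition `μᵢ ∈ V_f(x)`
defines a `G_δ` set because the empirical measures depend continuously on `x`. Hence `D` is
itself a dense `G_δ`.
-/

open TopologicalSpace
open scoped BoundedContinuousFunction

section ClusterPoints

variable {X Y : Type*} [TopologicalSpace X] [TopologicalSpace Y] [PseudoMetrizableSpace Y]
  {u : ℕ → X → Y}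

theorem isGδ_setOf_mapClusterPt (hu : ∀ n, Continuous (u n)) (y : Y) :
    IsGδ {x | MapClusterPt y atTop fun n => u n x} := by
  let := pseudoMetrizableSpacePseudoMetric Y
  have hset : {x | MapClusterPt y atTop fun n => u n x} =
      ⋂ k : ℕ, ⋂ n : ℕ, ⋃ m ≥ n, u m ⁻¹' Metric.ball y (1 / (k + 1)) := by
    ext x
    simp [Metric.nhds_basis_ball_inv_nat_succ.mapClusterPt_iff_frequently, frequently_atTop]
  rw [hset]
  exact .iInter fun k => .iInter fun n => IsOpen.isGδ <|
    isOpen_biUnion fun m _ => Metric.isOpen_ball.preimage (hu m)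

theorem isGδ_setOf_subset_mapClusterPt (hu : ∀ n, Continuous (u n)) {K : Set Y}
    (hK : IsSeparable K) : IsGδ {x | K ⊆ {y | MapClusterPt y atTop fun n => u n x}} := by
  obtain ⟨C, hCK, hC, hKC⟩ := hK.exists_countable_dense_subset
  -- the set of cluster points is closed, so it contains `K` as soon as it contains `C`
  have hset : {x | K ⊆ {y | MapClusterPt y atTop fun n => u n x}} =
      ⋂ y ∈ C, {x | MapClusterPt y atTop fun n => u n x} := by
    ext x
    simp only [Set.mem_ofPred_eq, Set.mem_iInter]
    refine ⟨fun h y hy => h (hCK hy), fun h => hKC.trans ?_⟩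
    exact closure_minimal h isClosed_setOfPred_clusterPt
  rw [hset]
  exact .biInter hC fun y _ => isGδ_setOf_mapClusterPt hu y

end ClusterPoints

theorem MeasureTheory.ProbabilityMeasure.map_eq_self_of_mapClusterPt {Ω ι : Type*}
    [TopologicalSpace Ω] [HasOuterApproxClosed Ω] [MeasurableSpace Ω] [BorelSpace Ω]
    {f : Ω → Ω} (hf : Continuous f) {l : Filter ι} {ν : ι → ProbabilityMeasure Ω}
    (hν : ∀ g : Ω →ᵇ ℝ, Tendsto (fun i => ∫ ω, g (f ω) ∂(ν i : Measure Ω) -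
      ∫ ω, g ω ∂(ν i : Measure Ω)) l (𝓝 0))
    {μ : ProbabilityMeasure Ω} (hμ : MapClusterPt μ l ν) : (μ : Measure Ω).map f = μ := by
  have := Measure.isProbabilityMeasure_map (μ := (μ : Measure Ω)) hf.aemeasurable
  refine ext_of_forall_integral_eq_of_IsFiniteMeasure fun g => ?_
  rw [integral_map hf.aemeasurable g.continuous.aestronglyMeasurable, ← sub_eq_zero]
  have hcont : Continuous fun ρ : ProbabilityMeasure Ω =>
      ∫ ω, g (f ω) ∂(ρ : Measure Ω) - ∫ ω, g ω ∂(ρ : Measure Ω) :=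
    (ProbabilityMeasure.continuous_integral_boundedContinuousFunction
      (g.compContinuous ⟨f, hf⟩)).sub
      (ProbabilityMeasure.continuous_integral_boundedContinuousFunction g)
  exact eq_of_nhds_neBot ((hμ.continuousAt_comp hcont.continuousAt).clusterPt.mono (hν g))

section Empirical

variable [MetricSpace Λ] [MeasurableSpace Λ] [BorelSpace Λ]

theorem integral_empP (f : Λ → Λ) (x : Λ) (N : ℕ) (g : Λ → ℝ) :
    ∫ ω, g ω ∂(empP f x N : Measure Λ) =
      ((N : ℝ) + 1)⁻¹ * ∑ j ∈ Finset.range (N + 1), g (f^[j] x) := by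
  change ∫ ω, g ω ∂(((N + 1 : ℕ) : ℝ≥0∞)⁻¹ •
      ∑ j ∈ Finset.range (N + 1), Measure.dirac (f^[j] x)) = _
  rw [integral_smul_measure, integral_finsetSum_measure fun j _ => integrable_dirac enorm_lt_top,
    ENNReal.toReal_inv, ENNReal.toReal_natCast]
  simp [integral_dirac]

theorem integral_comp_sub_integral_empP (f : Λ → Λ) (x : Λ) (N : ℕ) (g : Λ → ℝ) :
    ∫ ω, g (f ω) ∂(empP f x N : Measure Λ) - ∫ ω, g ω ∂(empP f x N : Measure Λ) =
      ((N : ℝ) + 1)⁻¹ * (g (f^[N + 1] x) - g x) := by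
  rw [integral_empP, integral_empP, ← mul_sub, ← Finset.sum_sub_distrib]
  simp_rw [← Function.iterate_succ_apply' f]
  rw [Finset.sum_range_sub (fun j => g (f^[j] x)), Function.iterate_zero_apply]

theorem tendsto_integral_comp_sub_integral_empP (f : Λ → Λ) (x : Λ) (g : Λ →ᵇ ℝ) :
    Tendsto (fun N => ∫ ω, g (f ω) ∂(empP f x N : Measure Λ) -
      ∫ ω, g ω ∂(empP f x N : Measure Λ)) atTop (𝓝 0) := by
  simp_rw [integral_comp_sub_integral_empP]
  refine squeeze_zero_norm (fun N => ?_)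
    (by simpa using tendsto_one_div_add_atTop_nhds_zero_nat.mul_const (2 * ‖g‖))
  rw [norm_mul, norm_inv, Real.norm_of_nonneg (by positivity), ← dist_eq_norm]
  gcongr
  exact g.dist_le_two_norm _ _

theorem continuous_empP {f : Λ → Λ} (hf : Continuous f) (N : ℕ) :
    Continuous fun x : Λ => empP f x N := by
  refine ProbabilityMeasure.continuous_iff_forall_continuous_integral.mpr fun g => ?_
  simp_rw [integral_empP]
  exact continuous_const.mul <| continuous_finsetSum _ fun j _ =>
    g.continuous.comp (hf.iterate j)

theorem accPts_subset_invProb {f : Λ → Λ} (hf : Continuous f) (x : Λ) :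
    accPts f x ⊆ invProb f :=
  fun _ hμ => ProbabilityMeasure.map_eq_self_of_mapClusterPt hf
    (tendsto_integral_comp_sub_integral_empP f x) hμ

end Empirical

/-- if `D = {x ∈ Λ : V_f(x) = M_f(Λ)}` is dense in `Λ`, then `D` is
residual: it contains a dense Gδ set. -/
theorem dense_accPts_eq_inv_is_residual
    [MetricSpace Λ] [CompactSpace Λ] [MeasurableSpace Λ] [BorelSpace Λ]
    (f : Λ → Λ) (hf : Continuous f)
    (hdense : Dense {x : Λ | accPts f x = invProb f}) :
    ∃ S : Set Λ, IsGδ S ∧ Dense S ∧ S ⊆ {x : Λ | accPts f x = invProb f} := by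
  refine ⟨_, ?_, hdense, subset_rfl⟩
  have hset : {x : Λ | accPts f x = invProb f} = {x | invProb f ⊆ accPts f x} := by
    ext x
    exact ⟨fun h => h.ge, (accPts_subset_invProb hf x).antisymm⟩
  rw [hset]
  -- by Prokhorov, `ProbabilityMeasure Λ` is compact and metrizable, hence separable
  exact isGδ_setOf_subset_mapClusterPt (u := fun N x => empP f x N) (continuous_empP hf)
    (.of_separableSpace _)
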